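/- arXiv:1209.4095 — 2 statements merged into one kernel-verified Lean document; each statement's English description precedes it below -/
import Mathlib

section
/- Let B be an n×n exchange matrix and let R be ℚ or ℝ. If U is an R-spanning set for B, then there exists an R-basis for B contained in U. -/
open scoped BigOperators

namespace MutationFanPaper

/-- An exchange matrix: a skew-symmetrizable `n × n` integer matrix. -/
def IsExchangeMatrix {n : ℕ} (B : Matrix (Fin n) (Fin n) ℤ) : Prop :=
  ∃ d : Fin n → ℤ, (∀ i, 0 < d i) ∧ ∀ i j, d i * B i j = -(d j * B j i)

/-- Matrix mutation in direction `k`. -/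
def mutate {n : ℕ} (B : Matrix (Fin n) (Fin n) ℤ) (k : Fin n) : Matrix (Fin n) (Fin n) ℤ :=
  fun i j =>
    if i = k ∨ j = k then -B i j
    else B i j + Int.sign (B k j) * max (B i k * B k j) 0

/-- The mutation map `η_k^B : ℝⁿ → ℝⁿ`. -/
noncomputable def etaStep {n : ℕ} (B : Matrix (Fin n) (Fin n) ℤ) (k : Fin n) (a : Fin n → ℝ) : Fin n → ℝ :=
  fun j =>
    if j = k then -a k
    else if 0 ≤ a k ∧ 0 ≤ B k j then a j + a k * (B k j : ℝ)
    else if a k ≤ 0 ∧ B k j ≤ 0 then a j - a k * (B k j : ℝ)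
    else a j

/-- `etaSeq B κ` is the mutation map `η_κ^B`, where the list `κ` records the indices in
order of application (the head of the list is applied first, using the matrix `B` itself). -/
noncomputable def etaSeq {n : ℕ} (B : Matrix (Fin n) (Fin n) ℤ) : List (Fin n) → (Fin n → ℝ) → Fin n → ℝ
  | [], a => a
  | k :: κ, a => etaSeq (mutate B k) κ (etaStep B k a)

/-- Iterated matrix mutation along a list of indices; the head is applied first. -/
def mutateSeq {n : ℕ} (B : Matrix (Fin n) (Fin n) ℤ) : List (Fin n) → Matrix (Fin n) (Fin n) ℤ
  | [] => B
  | k :: κ => mutateSeq (mutate B k) κ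

/-- The copy of ℤ inside ℝ, as a subring. -/
def intSR : Subring ℝ := (Int.castRingHom ℝ).range

/-- The copy of ℚ inside ℝ, as a subring. -/
noncomputable def ratSR : Subring ℝ := (Rat.castHom ℝ).range

/-- The formal expression `Σ_{i ∈ S} c i • v i` is a `B`-coherent linear relation. -/
def IsBCoherentRel {n : ℕ} (B : Matrix (Fin n) (Fin n) ℤ) {ι : Type*} (S : Finset ι)
    (v : ι → Fin n → ℝ) (c : ι → ℝ) : Prop :=
  ∀ κ : List (Fin n),
    (∑ i ∈ S, c i • etaSeq B κ (v i)) = 0 ∧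
    (∑ i ∈ S, c i • (fun j => min (etaSeq B κ (v i) j) 0)) = 0

/-- The formal expression `a - Σ_{i ∈ S} c i • v i` is a `B`-coherent linear relation. -/
def IsBCoherentDiff {n : ℕ} (B : Matrix (Fin n) (Fin n) ℤ) (a : Fin n → ℝ) {ι : Type*}
    (S : Finset ι) (v : ι → Fin n → ℝ) (c : ι → ℝ) : Prop :=
  ∀ κ : List (Fin n),
    (etaSeq B κ a - ∑ i ∈ S, c i • etaSeq B κ (v i)) = 0 ∧
    ((fun j => min (etaSeq B κ a j) 0) -
      ∑ i ∈ S, c i • (fun j => min (etaSeq B κ (v i) j) 0)) = 0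

/-- The family `b` is an `R`-spanning set for `B` (a family of vectors in `Rⁿ` such that every
`a ∈ Rⁿ` admits a `B`-coherent relation `a - Σ_{i ∈ S} c i • b i` with coefficients in `R`). -/
def SpanningOver {n : ℕ} (R : Subring ℝ) (B : Matrix (Fin n) (Fin n) ℤ) {ι : Type*}
    (b : ι → Fin n → ℝ) : Prop :=
  (∀ i j, b i j ∈ R) ∧
  ∀ a : Fin n → ℝ, (∀ j, a j ∈ R) →
    ∃ (S : Finset ι) (c : ι → ℝ), (∀ i ∈ S, c i ∈ R) ∧ IsBCoherentDiff B a S b c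

/-- The family `b` is an `R`-independent set for `B`. -/
def IndependentOver {n : ℕ} (R : Subring ℝ) (B : Matrix (Fin n) (Fin n) ℤ) {ι : Type*}
    (b : ι → Fin n → ℝ) : Prop :=
  (∀ i j, b i j ∈ R) ∧
  ∀ (S : Finset ι) (c : ι → ℝ), (∀ i ∈ S, c i ∈ R) → IsBCoherentRel B S b c →
    ∀ i ∈ S, c i = 0

/-- The family `b` is an `R`-basis for `B`. -/
def BasisOver {n : ℕ} (R : Subring ℝ) (B : Matrix (Fin n) (Fin n) ℤ) {ι : Type*}
    (b : ι → Fin n → ℝ) : Prop :=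
  SpanningOver R B b ∧ IndependentOver R B b

/-- The family `b` is a positive `R`-basis for `B`. -/
def PositiveBasisOver {n : ℕ} (R : Subring ℝ) (B : Matrix (Fin n) (Fin n) ℤ) {ι : Type*}
    (b : ι → Fin n → ℝ) : Prop :=
  BasisOver R B b ∧
  ∀ a : Fin n → ℝ, (∀ j, a j ∈ R) →
    ∃ (S : Finset ι) (c : ι → ℝ), (∀ i ∈ S, c i ∈ R ∧ 0 ≤ c i) ∧ IsBCoherentDiff B a S b c

/-- The relation `a ≡^B a'`: all mutation maps give componentwise equal signs. -/
def eqB {n : ℕ} (B : Matrix (Fin n) (Fin n) ℤ) (a a' : Fin n → ℝ) : Prop :=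
  ∀ (κ : List (Fin n)) (j : Fin n),
    Real.sign (etaSeq B κ a j) = Real.sign (etaSeq B κ a' j)

/-- A `B`-class: an equivalence class of `≡^B`. -/
def IsBClass {n : ℕ} (B : Matrix (Fin n) (Fin n) ℤ) (C : Set (Fin n → ℝ)) : Prop :=
  ∃ a, C = {a' | eqB B a a'}

/-- A `B`-cone: the closure of a `B`-class. -/
def IsBCone {n : ℕ} (B : Matrix (Fin n) (Fin n) ℤ) (C : Set (Fin n → ℝ)) : Prop :=
  ∃ D, IsBClass B D ∧ C = closure D

/-- A convex cone: a set closed under addition and positive scaling. -/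
def IsConvexCone {n : ℕ} (C : Set (Fin n → ℝ)) : Prop :=
  (∀ x ∈ C, ∀ y ∈ C, x + y ∈ C) ∧ ∀ x ∈ C, ∀ r : ℝ, 0 < r → r • x ∈ C

/-- `F` is a face of the convex cone `C`: a convex subset such that any line segment
contained in `C` whose interior meets `F` lies entirely in `F`. -/
def IsFaceOf {n : ℕ} (C F : Set (Fin n → ℝ)) : Prop :=
  F ⊆ C ∧ Convex ℝ F ∧
    ∀ x y : Fin n → ℝ, segment ℝ x y ⊆ C → (openSegment ℝ x y ∩ F).Nonempty →
      segment ℝ x y ⊆ F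

/-- The mutation fan `ℱ_B`: all `B`-cones and all faces of `B`-cones. -/
def MutFan {n : ℕ} (B : Matrix (Fin n) (Fin n) ℤ) : Set (Set (Fin n → ℝ)) :=
  {C | IsBCone B C ∨ ∃ D, IsBCone B D ∧ IsFaceOf D C}

/-- A fan: a collection of closed convex cones, closed under taking faces, in which the
intersection of any two cones is a face of each. -/
def IsFan {n : ℕ} (F : Set (Set (Fin n → ℝ))) : Prop :=
  (∀ C ∈ F, IsClosed C ∧ IsConvexCone C) ∧
  (∀ C ∈ F, ∀ G, IsFaceOf C G → G ∈ F) ∧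
  ∀ C ∈ F, ∀ D ∈ F, IsFaceOf C (C ∩ D) ∧ IsFaceOf D (C ∩ D)

/-- A set of vectors is sign-coherent if no two of its members have strictly opposite
signs in any coordinate. -/
def SignCoherentSet {n : ℕ} (S : Set (Fin n → ℝ)) : Prop :=
  ∀ x ∈ S, ∀ y ∈ S, ∀ j, ¬(x j < 0 ∧ 0 < y j)

/-- The ray spanned by a vector `v`. -/
def rayOf {n : ℕ} (v : Fin n → ℝ) : Set (Fin n → ℝ) :=
  {x | ∃ t : ℝ, 0 ≤ t ∧ x = t • v}

/-- `C` is a ray of the fan `F`: a one-dimensional cone belonging to `F`. -/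
def IsRayOf {n : ℕ} (F : Set (Set (Fin n → ℝ))) (C : Set (Fin n → ℝ)) : Prop :=
  C ∈ F ∧ ∃ v : Fin n → ℝ, v ≠ 0 ∧ C = rayOf v

/-- A simplicial cone: the nonnegative span of finitely many linearly independent vectors. -/
def IsSimplicialCone {n : ℕ} (C : Set (Fin n → ℝ)) : Prop :=
  ∃ (k : ℕ) (v : Fin k → Fin n → ℝ), LinearIndependent ℝ v ∧
    C = {x | ∃ c : Fin k → ℝ, (∀ i, 0 ≤ c i) ∧ x = ∑ i, c i • v i}

/-- A rational cone: the nonnegative span of finitely many rational vectors. -/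
def IsRationalCone {n : ℕ} (C : Set (Fin n → ℝ)) : Prop :=
  ∃ (k : ℕ) (v : Fin k → Fin n → ℝ), (∀ i j, ∃ q : ℚ, v i j = (q : ℝ)) ∧
    C = {x | ∃ c : Fin k → ℝ, (∀ i, 0 ≤ c i) ∧ x = ∑ i, c i • v i}

/-- `F'` is the rational part of the fan `F`. -/
def IsRationalPart {n : ℕ} (F F' : Set (Set (Fin n → ℝ))) : Prop :=
  IsFan F' ∧ (∀ C ∈ F', IsRationalCone C) ∧
  (∀ C ∈ F', ∃ D ∈ F, C ⊆ D) ∧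
  ∀ C ∈ F, ∃ D ∈ F', D ⊆ C ∧ (∀ D' ∈ F', D' ⊆ C → D' ⊆ D) ∧
    ∀ x ∈ C, (∀ j, ∃ q : ℚ, x j = (q : ℝ)) → x ∈ D

/-- `v` is the smallest nonzero integer vector in the cone `C`. -/
def IsSmallestIntVec {n : ℕ} (C : Set (Fin n → ℝ)) (v : Fin n → ℝ) : Prop :=
  v ∈ C ∧ v ≠ 0 ∧ (∀ j, ∃ m : ℤ, v j = (m : ℝ)) ∧
    ∀ w ∈ C, w ≠ 0 → (∀ j, ∃ m : ℤ, w j = (m : ℝ)) → ‖v‖ ≤ ‖w‖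

end MutationFanPaper

/-!
A `B`-coherent linear relation among vectors `v i` is exactly a linear relation among their
profiles `κ ↦ (η_κ^B (v i), min (η_κ^B (v i)) 0)` in the real vector space
`List (Fin n) → ℝⁿ × ℝⁿ`. When the coefficient ring `R` is a subfield `K` of `ℝ`, being an
`R`-spanning (resp. `R`-independent) set for `B` therefore means that the profiles span the
profiles of all vectors of `Kⁿ` over `K` (resp. are `K`-linearly independent), and a spanning
set contains a basis by the usual Zorn's lemma extraction of a maximal independent subset.
-/

namespace MutationFanPaper

open Set Submodule

section Profile

variable {n : ℕ} (B : Matrix (Fin n) (Fin n) ℤ)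

noncomputable def coherenceProfile (a : Fin n → ℝ) : List (Fin n) → (Fin n → ℝ) × (Fin n → ℝ) :=
  fun κ => (etaSeq B κ a, fun j => min (etaSeq B κ a j) 0)

lemma sum_smul_coherenceProfile_apply {ι : Type*} (S : Finset ι) (v : ι → Fin n → ℝ)
    (c : ι → ℝ) (κ : List (Fin n)) :
    (∑ i ∈ S, c i • coherenceProfile B (v i)) κ =
      (∑ i ∈ S, c i • etaSeq B κ (v i),
        ∑ i ∈ S, c i • fun j => min (etaSeq B κ (v i) j) 0) := by
  ext <;> simp [coherenceProfile, Finset.sum_apply, Prod.fst_sum, Prod.snd_sum]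

lemma isBCoherentRel_iff {ι : Type*} (S : Finset ι) (v : ι → Fin n → ℝ) (c : ι → ℝ) :
    IsBCoherentRel B S v c ↔ ∑ i ∈ S, c i • coherenceProfile B (v i) = 0 := by
  simp only [IsBCoherentRel, funext_iff, sum_smul_coherenceProfile_apply, Pi.zero_apply,
    Prod.mk_eq_zero]

lemma isBCoherentDiff_iff (a : Fin n → ℝ) {ι : Type*} (S : Finset ι) (v : ι → Fin n → ℝ)
    (c : ι → ℝ) :
    IsBCoherentDiff B a S v c ↔ coherenceProfile B a = ∑ i ∈ S, c i • coherenceProfile B (v i) := by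
  simp only [IsBCoherentDiff, funext_iff (f := coherenceProfile B a),
    sum_smul_coherenceProfile_apply, coherenceProfile, Prod.mk.injEq, sub_eq_zero]

end Profile

lemma Subfield.exists_lift_of_forall_mem {K : Subfield ℝ} {ι : Type*} {S : Finset ι}
    {c : ι → ℝ} (hc : ∀ i ∈ S, c i ∈ K) : ∃ d : ι → K, ∀ i ∈ S, (d i : ℝ) = c i := by
  classical
  exact ⟨fun i => if h : i ∈ S then ⟨c i, hc i h⟩ else 0, fun i hi => by simp [hi]⟩

section OverSubfield

variable {n : ℕ} (B : Matrix (Fin n) (Fin n) ℤ) (K : Subfield ℝ) {ι : Type*}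
  (b : ι → Fin n → ℝ)

lemma spanningOver_iff :
    SpanningOver K.toSubring B b ↔ (∀ i j, b i j ∈ K) ∧
      ∀ a : Fin n → ℝ, (∀ j, a j ∈ K) →
        coherenceProfile B a ∈ span K (range (coherenceProfile B ∘ b)) := by
  refine and_congr_right fun _ => forall₂_congr fun a _ => ⟨?_, ?_⟩
  · rintro ⟨S, c, hc, hdiff⟩
    obtain ⟨d, hd⟩ := Subfield.exists_lift_of_forall_mem hc
    have hsum : ∑ i ∈ S, c i • coherenceProfile B (b i) =
        ∑ i ∈ S, d i • (coherenceProfile B ∘ b) i :=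
      Finset.sum_congr rfl fun i hi => by rw [← hd i hi]; rfl
    rw [(isBCoherentDiff_iff B a S b c).1 hdiff, hsum]
    exact sum_mem fun i _ => smul_mem _ (d i) (subset_span ⟨i, rfl⟩)
  · rw [Finsupp.mem_span_range_iff_exists_finsupp]
    rintro ⟨l, hl⟩
    exact ⟨l.support, fun i => l i, fun i _ => (l i).2,
      (isBCoherentDiff_iff B a _ b _).2 hl.symm⟩

lemma independentOver_iff :
    IndependentOver K.toSubring B b ↔
      (∀ i j, b i j ∈ K) ∧ LinearIndependent K (coherenceProfile B ∘ b) := by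
  refine and_congr_right fun _ => ⟨fun h => ?_, fun h S c hc hrel => ?_⟩
  · refine linearIndependent_iff'.2 fun S d hd i hi => Subtype.ext ?_
    exact h S (fun i => d i) (fun i _ => (d i).2) ((isBCoherentRel_iff B S b _).2 hd) i hi
  · obtain ⟨d, hd⟩ := Subfield.exists_lift_of_forall_mem hc
    have hrel' : ∑ i ∈ S, d i • (coherenceProfile B ∘ b) i = 0 := by
      rw [← (isBCoherentRel_iff B S b c).1 hrel]
      exact Finset.sum_congr rfl fun i hi => by rw [← hd i hi]; rfl
    intro i hi
    rw [← hd i hi, linearIndependent_iff'.1 h S d hrel' i hi, ZeroMemClass.coe_zero]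

theorem exists_basisOver_subset_of_spanningOver (U : Set (Fin n → ℝ))
    (hU : SpanningOver K.toSubring B (fun u : U => (u : Fin n → ℝ))) :
    ∃ V ⊆ U, BasisOver K.toSubring B (fun v : V => (v : Fin n → ℝ)) := by
  obtain ⟨hUK, hUspan⟩ := (spanningOver_iff B K _).1 hU
  obtain ⟨V, hVU, -, hUV, hVind⟩ :=
    exists_linearIndepOn_extension (linearIndepOn_empty K (coherenceProfile B)) (empty_subset U)
  have hVK : ∀ (v : V) j, (v : Fin n → ℝ) j ∈ K := fun v => hUK ⟨v, hVU v.2⟩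
  refine ⟨V, hVU, (spanningOver_iff B K _).2 ⟨hVK, fun a ha => ?_⟩,
    (independentOver_iff B K _).2 ⟨hVK, hVind⟩⟩
  rw [range_comp, Subtype.range_coe] at hUspan ⊢
  exact span_le.2 hUV (hUspan a ha)

end OverSubfield

theorem exists_basisOver_subset_spanning_general {n : ℕ}
    (B : Matrix (Fin n) (Fin n) ℤ) (R : Subring ℝ)
    (hR : R = ratSR ∨ R = (⊤ : Subring ℝ)) (U : Set (Fin n → ℝ))
    (hU : SpanningOver R B (fun u : U => (u : Fin n → ℝ))) :
    ∃ V : Set (Fin n → ℝ), V ⊆ U ∧ BasisOver R B (fun v : V => (v : Fin n → ℝ)) := by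
  obtain ⟨K, rfl⟩ : ∃ K : Subfield ℝ, K.toSubring = R := by
    rcases hR with rfl | rfl
    · exact ⟨(Rat.castHom ℝ).fieldRange, by ext; simp [ratSR, RingHom.mem_fieldRange]⟩
    · exact ⟨⊤, rfl⟩
  exact exists_basisOver_subset_of_spanningOver B K U hU

/-- For any exchange matrix `B` and `R = ℚ` or `R = ℝ`, any `R`-spanning
set `U` for `B` contains an `R`-basis for `B`. -/
theorem exists_basisOver_subset_spanning {n : ℕ} (hn : 1 ≤ n)
    (B : Matrix (Fin n) (Fin n) ℤ) (hB : IsExchangeMatrix B) (R : Subring ℝ)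
    (hR : R = ratSR ∨ R = (⊤ : Subring ℝ)) (U : Set (Fin n → ℝ))
    (hU : SpanningOver R B (fun u : U => (u : Fin n → ℝ))) :
    ∃ V : Set (Fin n → ℝ), V ⊆ U ∧ BasisOver R B (fun v : V => (v : Fin n → ℝ)) :=
  exists_basisOver_subset_spanning_general B R hR U hU

end MutationFanPaper
end

section
/- Let B be an n×n exchange matrix. Then the mutation fan ℱ_B is a complete fan: every element of ℱ_B is a closed convex cone, every face of a cone in ℱ_B is in ℱ_B, the intersection of any two cones in ℱ_B is a face of each of the two, and the union of the cones in ℱ_B is all of ℝ^n. -/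
/-!
For `a : ℝⁿ` let `bCone B a` be the set of `x` such that, for every `κ` and `j`, `η_κ^B x` is
`≥ 0` in coordinate `j` whenever `η_κ^B a` is, and `≤ 0` whenever `η_κ^B a` is. Each `η_k^B` is
continuous, positively homogeneous and additive on vectors that are sign-coherent in coordinate
`k`; since any two points of `bCone B a` are sign-coherent under every `η_κ^B`, the set
`bCone B a` is a closed convex cone on which all `η_κ^B` are linear. As `x + t a ≡^B a` for
`x ∈ bCone B a` and `t > 0`, it is exactly the `B`-cone of `a`. Linearity on a segment in
`bCone B a` shows that an interior point of the segment lies in another `B`-cone only if the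
whole segment does, so two `B`-cones meet in a face of each. The fan axioms then follow from
general facts on faces: they are transitive, faces of closed convex cones are closed convex
cones, and faces of two cones meet in a face of each when the two cones do.
-/

open scoped BigOperators

namespace MutationFanPaper

variable {n : ℕ}

section MutationMaps

variable (B : Matrix (Fin n) (Fin n) ℤ)

lemma etaStep_apply_self (k : Fin n) (a : Fin n → ℝ) : etaStep B k a k = -a k :=
  if_pos rfl

lemma etaStep_apply_of_ne {k j : Fin n} (hj : j ≠ k) (a : Fin n → ℝ) :
    etaStep B k a j = a j + (Int.sign (B k j) : ℝ) * max (a k * B k j) 0 := by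
  simp only [etaStep, if_neg hj]
  rcases lt_trichotomy (B k j) 0 with hb | hb | hb
  · have hbR : (B k j : ℝ) < 0 := by exact_mod_cast hb
    rcases le_total (a k) 0 with ha | ha
    · rw [max_eq_left (mul_nonneg_of_nonpos_of_nonpos ha hbR.le)]
      simp [Int.sign_eq_neg_one_of_neg hb, ha, hb.le, hb.not_ge]; ring
    · rw [max_eq_right (mul_nonpos_of_nonneg_of_nonpos ha hbR.le)]
      simp [ha, hb.not_ge]
      intro h; simp [le_antisymm h ha]
  · simp [hb]
  · have hbR : 0 < (B k j : ℝ) := by exact_mod_cast hb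
    rcases le_total 0 (a k) with ha | ha
    · rw [max_eq_left (mul_nonneg ha hbR.le)]
      simp [Int.sign_eq_one_of_pos hb, ha, hb.le]
    · rw [max_eq_right (mul_nonpos_of_nonpos_of_nonneg ha hbR.le)]
      simp [ha, hb.not_ge]
      intro h; simp [le_antisymm ha h]

lemma continuous_etaStep (k : Fin n) : Continuous (etaStep B k) := by
  refine continuous_pi fun j => ?_
  rcases eq_or_ne j k with rfl | hj
  · simp_rw [etaStep_apply_self]
    fun_prop
  · simp_rw [etaStep_apply_of_ne B hj]
    fun_prop

lemma continuous_etaSeq (κ : List (Fin n)) : Continuous (etaSeq B κ) := by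
  induction κ generalizing B with
  | nil => exact continuous_id
  | cons k κ ih => exact (ih _).comp (continuous_etaStep B k)

lemma etaStep_smul (k : Fin n) {r : ℝ} (hr : 0 ≤ r) (a : Fin n → ℝ) :
    etaStep B k (r • a) = r • etaStep B k a := by
  funext j
  rcases eq_or_ne j k with rfl | hj
  · simp [etaStep_apply_self]
  · have hmax (u : ℝ) : max (r * u) 0 = r * max u 0 := by
      rw [mul_max_of_nonneg _ _ hr, mul_zero]
    simp only [etaStep_apply_of_ne B hj, Pi.smul_apply, smul_eq_mul, mul_assoc, hmax]
    ring

lemma etaSeq_smul (κ : List (Fin n)) {r : ℝ} (hr : 0 ≤ r) (a : Fin n → ℝ) :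
    etaSeq B κ (r • a) = r • etaSeq B κ a := by
  induction κ generalizing B a with
  | nil => rfl
  | cons k κ ih => exact (congrArg _ (etaStep_smul B k hr a)).trans (ih _ _)

lemma max_add_zero_of_mul_nonneg {u v : ℝ} (h : 0 ≤ u * v) :
    max (u + v) 0 = max u 0 + max v 0 := by
  rcases mul_nonneg_iff.mp h with ⟨hu, hv⟩ | ⟨hu, hv⟩
  · simp [hu, hv, add_nonneg hu hv]
  · simp [hu, hv, add_nonpos hu hv]

lemma etaStep_add (k : Fin n) {x y : Fin n → ℝ} (h : 0 ≤ x k * y k) :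
    etaStep B k (x + y) = etaStep B k x + etaStep B k y := by
  funext j
  rcases eq_or_ne j k with rfl | hj
  · simp only [etaStep_apply_self, Pi.add_apply]; ring
  · have hb : 0 ≤ x k * B k j * (y k * B k j) := by
      rw [mul_mul_mul_comm]; exact mul_nonneg h (mul_self_nonneg _)
    simp only [etaStep_apply_of_ne B hj, Pi.add_apply, add_mul, max_add_zero_of_mul_nonneg hb]
    ring

lemma etaSeq_add {x y : Fin n → ℝ} (h : ∀ κ j, 0 ≤ etaSeq B κ x j * etaSeq B κ y j)
    (κ : List (Fin n)) : etaSeq B κ (x + y) = etaSeq B κ x + etaSeq B κ y := by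
  induction κ generalizing B x y with
  | nil => rfl
  | cons k κ ih =>
    exact (congrArg _ (etaStep_add B k (h [] k))).trans (ih _ fun κ' j => h (k :: κ') j)

end MutationMaps

lemma nonneg_of_sign_eq_sign {u v : ℝ} (h : Real.sign u = Real.sign v) (hu : 0 ≤ u) : 0 ≤ v := by
  by_contra! hv
  rw [Real.sign_of_neg hv] at h
  rcases hu.lt_or_eq with hu | rfl
  · rw [Real.sign_of_pos hu] at h; norm_num at h
  · rw [Real.sign_zero] at h; norm_num at h

lemma nonpos_of_sign_eq_sign {u v : ℝ} (h : Real.sign u = Real.sign v) (hu : u ≤ 0) : v ≤ 0 :=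
  neg_nonneg.mp <| nonneg_of_sign_eq_sign (by rw [Real.sign_neg, Real.sign_neg, h])
    (neg_nonneg.mpr hu)

lemma nonneg_of_mul_nonneg_of_add_nonneg {u v p q : ℝ} (huv : 0 ≤ u * v) (hp : 0 < p)
    (hq : 0 ≤ q) (h : 0 ≤ p * u + q * v) : 0 ≤ u := by
  by_contra! hu
  linarith [mul_neg_of_pos_of_neg hp hu,
    mul_nonpos_of_nonneg_of_nonpos hq (nonpos_of_mul_nonneg_right huv hu)]

lemma nonpos_of_mul_nonneg_of_add_nonpos {u v p q : ℝ} (huv : 0 ≤ u * v) (hp : 0 < p)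
    (hq : 0 ≤ q) (h : p * u + q * v ≤ 0) : u ≤ 0 :=
  neg_nonneg.mp <| nonneg_of_mul_nonneg_of_add_nonneg (u := -u) (v := -v) (by linarith) hp hq
    (by linarith)

section BCone

variable (B : Matrix (Fin n) (Fin n) ℤ)

/-- The closure of the `B`-class of `a` (`closure_setOf_eqB`). -/
def bCone (a : Fin n → ℝ) : Set (Fin n → ℝ) :=
  {x | ∀ κ j, (0 ≤ etaSeq B κ a j → 0 ≤ etaSeq B κ x j) ∧
    (etaSeq B κ a j ≤ 0 → etaSeq B κ x j ≤ 0)}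

variable {B}

lemma self_mem_bCone (a : Fin n → ℝ) : a ∈ bCone B a :=
  fun _ _ => ⟨id, id⟩

lemma mem_bCone_of_eqB {a x : Fin n → ℝ} (h : eqB B a x) : x ∈ bCone B a :=
  fun κ j => ⟨nonneg_of_sign_eq_sign (h κ j), nonpos_of_sign_eq_sign (h κ j)⟩

lemma mul_nonneg_of_mem_bCone {a x y : Fin n → ℝ} (hx : x ∈ bCone B a) (hy : y ∈ bCone B a)
    (κ : List (Fin n)) (j : Fin n) : 0 ≤ etaSeq B κ x j * etaSeq B κ y j := by
  rcases le_total 0 (etaSeq B κ a j) with h | h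
  · exact mul_nonneg ((hx κ j).1 h) ((hy κ j).1 h)
  · exact mul_nonneg_of_nonpos_of_nonpos ((hx κ j).2 h) ((hy κ j).2 h)

lemma etaSeq_add_of_mem_bCone {a x y : Fin n → ℝ} (hx : x ∈ bCone B a) (hy : y ∈ bCone B a)
    (κ : List (Fin n)) : etaSeq B κ (x + y) = etaSeq B κ x + etaSeq B κ y :=
  etaSeq_add B (mul_nonneg_of_mem_bCone hx hy) κ

lemma add_mem_bCone {a x y : Fin n → ℝ} (hx : x ∈ bCone B a) (hy : y ∈ bCone B a) :
    x + y ∈ bCone B a := by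
  intro κ j
  rw [etaSeq_add_of_mem_bCone hx hy, Pi.add_apply]
  exact ⟨fun h => add_nonneg ((hx κ j).1 h) ((hy κ j).1 h),
    fun h => add_nonpos ((hx κ j).2 h) ((hy κ j).2 h)⟩

lemma smul_mem_bCone {a x : Fin n → ℝ} (hx : x ∈ bCone B a) {r : ℝ} (hr : 0 ≤ r) :
    r • x ∈ bCone B a := by
  intro κ j
  rw [etaSeq_smul B κ hr, Pi.smul_apply, smul_eq_mul]
  exact ⟨fun h => mul_nonneg hr ((hx κ j).1 h),
    fun h => mul_nonpos_of_nonneg_of_nonpos hr ((hx κ j).2 h)⟩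

lemma convex_bCone (a : Fin n → ℝ) : Convex ℝ (bCone B a) :=
  fun _ hx _ hy _ _ hp hq _ => add_mem_bCone (smul_mem_bCone hx hp) (smul_mem_bCone hy hq)

lemma isClosed_bCone (a : Fin n → ℝ) : IsClosed (bCone B a) := by
  simp only [bCone, Set.ofPred_forall, Set.ofPred_and]
  have hcont (κ : List (Fin n)) (j : Fin n) : Continuous fun x => etaSeq B κ x j :=
    (continuous_apply j).comp (continuous_etaSeq B κ)
  exact isClosed_iInter fun κ => isClosed_iInter fun j =>
    (isClosed_iInter fun _ => isClosed_le continuous_const (hcont κ j)).inter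
      (isClosed_iInter fun _ => isClosed_le (hcont κ j) continuous_const)

lemma eqB_add_smul_of_mem_bCone {a x : Fin n → ℝ} (hx : x ∈ bCone B a) {t : ℝ} (ht : 0 < t) :
    eqB B a (x + t • a) := by
  intro κ j
  rw [etaSeq_add_of_mem_bCone hx (smul_mem_bCone (self_mem_bCone a) ht.le),
    etaSeq_smul B κ ht.le, Pi.add_apply, Pi.smul_apply, smul_eq_mul]
  rcases lt_trichotomy (etaSeq B κ a j) 0 with ha | ha | ha
  · rw [Real.sign_of_neg ha, Real.sign_of_neg]
    nlinarith [(hx κ j).2 ha.le]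
  · rw [ha, le_antisymm ((hx κ j).2 ha.le) ((hx κ j).1 ha.ge)]
    simp
  · rw [Real.sign_of_pos ha, Real.sign_of_pos]
    nlinarith [(hx κ j).1 ha.le]

lemma closure_setOf_eqB (a : Fin n → ℝ) : closure {x | eqB B a x} = bCone B a := by
  refine (closure_minimal (fun _ => mem_bCone_of_eqB) (isClosed_bCone a)).antisymm fun x hx => ?_
  have hlim : Filter.Tendsto (fun t : ℝ => x + t • a) (nhdsWithin 0 (Set.Ioi 0)) (nhds x) := by
    have : Continuous fun t : ℝ => x + t • a := by fun_prop
    simpa using (this.tendsto 0).mono_left nhdsWithin_le_nhds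
  exact mem_closure_of_tendsto hlim
    (eventually_nhdsWithin_of_forall fun t ht => eqB_add_smul_of_mem_bCone hx ht)

lemma isBCone_iff {C : Set (Fin n → ℝ)} : IsBCone B C ↔ ∃ a, C = bCone B a := by
  constructor
  · rintro ⟨D, ⟨a, rfl⟩, rfl⟩
    exact ⟨a, closure_setOf_eqB a⟩
  · rintro ⟨a, rfl⟩
    exact ⟨_, ⟨a, rfl⟩, (closure_setOf_eqB a).symm⟩

end BCone

lemma exists_mem_openSegment_of_mem_intrinsicInterior {E : Type*} [NormedAddCommGroup E]
    [NormedSpace ℝ E] {F : Set E} {x y : E}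
    (hy : y ∈ intrinsicInterior ℝ F) (hx : x ∈ affineSpan ℝ F) :
    ∃ z ∈ F, y ∈ openSegment ℝ x z := by
  obtain ⟨w, hw, rfl⟩ := mem_intrinsicInterior.mp hy
  let γ : ℝ → affineSpan ℝ F := fun t => ⟨AffineMap.lineMap (w : E) x (-t),
    AffineMap.lineMap_mem _ w.2 hx⟩
  have hγ : Continuous γ := by
    refine Continuous.subtype_mk ?_ _
    simp only [AffineMap.lineMap_apply_module]
    fun_prop
  have hγ0 : γ 0 = w := by ext; simp [γ]
  have hev : ∀ᶠ t in nhds (0 : ℝ), γ t ∈ interior (Subtype.val ⁻¹' F) :=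
    hγ.continuousAt.preimage_mem_nhds (hγ0 ▸ isOpen_interior.mem_nhds hw)
  obtain ⟨t, htF, ht⟩ := ((hev.filter_mono (nhdsWithin_le_nhds (s := Set.Ioi 0))).and
    self_mem_nhdsWithin).exists
  refine ⟨γ t, interior_subset (s := Subtype.val ⁻¹' F) htF, t / (1 + t), 1 / (1 + t),
    by positivity, by positivity, by field_simp; ring, ?_⟩
  simp only [γ, AffineMap.lineMap_apply_module]
  match_scalars <;> field_simp <;> ring

section Faces

variable {C D F G : Set (Fin n → ℝ)}

lemma isFaceOf_self (hC : Convex ℝ C) : IsFaceOf C C :=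
  ⟨subset_rfl, hC, fun _ _ hs _ => hs⟩

lemma IsFaceOf.trans (hF : IsFaceOf C F) (hG : IsFaceOf F G) : IsFaceOf C G :=
  ⟨hG.1.trans hF.1, hG.2.1, fun x y hs ⟨z, hz, hzG⟩ =>
    hG.2.2 x y (hF.2.2 x y hs ⟨z, hz, hG.1 hzG⟩) ⟨z, hz, hzG⟩⟩

lemma IsFaceOf.inter_of_isFaceOf_inter (hF : IsFaceOf C F) (hG : IsFaceOf D G)
    (hCD : IsFaceOf C (C ∩ D)) : IsFaceOf F (F ∩ G) := by
  refine ⟨Set.inter_subset_left, hF.2.1.inter hG.2.1, fun x y hs ⟨z, hz, hzF, hzG⟩ => ?_⟩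
  have hsCD : segment ℝ x y ⊆ C ∩ D :=
    hCD.2.2 x y (hs.trans hF.1) ⟨z, hz, hF.1 hzF, hG.1 hzG⟩
  exact Set.subset_inter hs (hG.2.2 x y (fun w hw => (hsCD hw).2) ⟨z, hz, hzG⟩)

lemma IsFaceOf.smul_mem (hF : IsFaceOf C F) (hC : ∀ x ∈ C, ∀ r : ℝ, 0 ≤ r → r • x ∈ C)
    {x : Fin n → ℝ} (hx : x ∈ F) {r : ℝ} (hr : 0 ≤ r) : r • x ∈ F := by
  -- `x` is an interior point of the segment `[0, (r + 2) • x] ⊆ C`, which contains `r • x`.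
  have hr2 : 0 < r + 2 := by linarith
  have hseg : segment ℝ 0 ((r + 2) • x) ⊆ C := by
    rintro _ ⟨-, θ, -, hθ, -, rfl⟩
    simpa [smul_smul] using hC x (hF.1 hx) _ (mul_nonneg hθ hr2.le)
  have hx_open : x ∈ openSegment ℝ 0 ((r + 2) • x) := by
    refine ⟨1 - (r + 2)⁻¹, (r + 2)⁻¹, ?_, by positivity, by ring, ?_⟩
    · rw [sub_pos, inv_lt_one₀ hr2]; linarith
    · rw [smul_zero, zero_add, smul_smul, inv_mul_cancel₀ hr2.ne', one_smul]
  refine hF.2.2 _ _ hseg ⟨x, hx_open, hx⟩ ⟨1 - r / (r + 2), r / (r + 2), ?_, by positivity,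
    by ring, ?_⟩
  · rw [sub_nonneg, div_le_one hr2]; linarith
  · rw [smul_zero, zero_add, smul_smul, div_mul_cancel₀ _ hr2.ne']

lemma IsFaceOf.add_mem (hF : IsFaceOf C F) (hC : ∀ x ∈ C, ∀ r : ℝ, 0 ≤ r → r • x ∈ C)
    {x y : Fin n → ℝ} (hx : x ∈ F) (hy : y ∈ F) : x + y ∈ F := by
  have hmid : (2 : ℝ)⁻¹ • x + (2 : ℝ)⁻¹ • y ∈ F :=
    hF.2.1 hx hy (by norm_num) (by norm_num) (by norm_num)
  simpa [smul_add, smul_smul] using hF.smul_mem hC hmid zero_le_two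

lemma IsFaceOf.isClosed (hF : IsFaceOf C F) (hC : IsClosed C) (hCconv : Convex ℝ C) :
    IsClosed F := by
  -- For `x ∈ closure F` and `y` in the relative interior of `F`, the segment from `x` to a point
  -- of `F` slightly beyond `y` lies in `C` and meets `F` at `y`, hence lies in `F`.
  rcases F.eq_empty_or_nonempty with rfl | hne
  · exact isClosed_empty
  obtain ⟨y, hy⟩ := hne.intrinsicInterior hF.2.1
  refine isClosed_of_closure_subset fun x hx => ?_
  have hx_span : x ∈ affineSpan ℝ F :=
    closure_minimal (subset_affineSpan ℝ F) (affineSpan ℝ F).closed_of_finiteDimensional hx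
  obtain ⟨z, hzF, hyxz⟩ := exists_mem_openSegment_of_mem_intrinsicInterior hy hx_span
  have hxC : x ∈ C := closure_minimal hF.1 hC hx
  exact hF.2.2 x z (hCconv.segment_subset hxC (hF.1 hzF))
    ⟨y, hyxz, intrinsicInterior_subset hy⟩ (left_mem_segment ℝ x z)

end Faces

section MutFan

variable {B : Matrix (Fin n) (Fin n) ℤ}

lemma etaSeq_smul_add_smul_of_mem_bCone {a x y : Fin n → ℝ} (hx : x ∈ bCone B a)
    (hy : y ∈ bCone B a) {p q : ℝ} (hp : 0 ≤ p) (hq : 0 ≤ q) (κ : List (Fin n)) :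
    etaSeq B κ (p • x + q • y) = p • etaSeq B κ x + q • etaSeq B κ y := by
  rw [etaSeq_add_of_mem_bCone (smul_mem_bCone hx hp) (smul_mem_bCone hy hq),
    etaSeq_smul B κ hp, etaSeq_smul B κ hq]

/-- The `η_κ^B` are linear on `bCone B a` and its points are sign-coherent, so an interior point
of a segment there has a coordinate `≥ 0` (`≤ 0`) only if both endpoints do. -/
lemma mem_bCone_of_mem_openSegment {a a' x y z : Fin n → ℝ} (hx : x ∈ bCone B a)
    (hy : y ∈ bCone B a) (hz : z ∈ openSegment ℝ x y) (hz' : z ∈ bCone B a') :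
    x ∈ bCone B a' := by
  obtain ⟨p, q, hp, hq, -, rfl⟩ := hz
  intro κ j
  have hxy := mul_nonneg_of_mem_bCone hx hy κ j
  have hz_eq : etaSeq B κ (p • x + q • y) j = p * etaSeq B κ x j + q * etaSeq B κ y j := by
    simp [etaSeq_smul_add_smul_of_mem_bCone hx hy hp.le hq.le κ]
  exact ⟨fun h => nonneg_of_mul_nonneg_of_add_nonneg hxy hp hq.le (hz_eq ▸ (hz' κ j).1 h),
    fun h => nonpos_of_mul_nonneg_of_add_nonpos hxy hp hq.le (hz_eq ▸ (hz' κ j).2 h)⟩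

lemma isFaceOf_bCone_inter (a a' : Fin n → ℝ) :
    IsFaceOf (bCone B a) (bCone B a ∩ bCone B a') := by
  refine ⟨Set.inter_subset_left, (convex_bCone a).inter (convex_bCone a'),
    fun x y hs ⟨z, hz, _, hz'⟩ => ?_⟩
  have hx := hs (left_mem_segment ℝ x y)
  have hy := hs (right_mem_segment ℝ x y)
  exact ((convex_bCone a).inter (convex_bCone a')).segment_subset
    ⟨hx, mem_bCone_of_mem_openSegment hx hy hz hz'⟩
    ⟨hy, mem_bCone_of_mem_openSegment hy hx (openSegment_symm ℝ x y ▸ hz) hz'⟩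

lemma bCone_mem_mutFan (a : Fin n → ℝ) : bCone B a ∈ MutFan B :=
  Or.inl (isBCone_iff.mpr ⟨a, rfl⟩)

lemma exists_isFaceOf_bCone_of_mem_mutFan {C : Set (Fin n → ℝ)} (hC : C ∈ MutFan B) :
    ∃ a, IsFaceOf (bCone B a) C := by
  rcases hC with hC | ⟨D, hD, hDC⟩
  · obtain ⟨a, rfl⟩ := isBCone_iff.mp hC
    exact ⟨a, isFaceOf_self (convex_bCone a)⟩
  · obtain ⟨a, rfl⟩ := isBCone_iff.mp hD
    exact ⟨a, hDC⟩

end MutFan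

theorem mutFan_isCompleteFan_general {n : ℕ} (B : Matrix (Fin n) (Fin n) ℤ) :
    (∀ C ∈ MutFan B, IsClosed C ∧ IsConvexCone C) ∧
    (∀ C ∈ MutFan B, ∀ G, IsFaceOf C G → G ∈ MutFan B) ∧
    (∀ C ∈ MutFan B, ∀ D ∈ MutFan B, IsFaceOf C (C ∩ D) ∧ IsFaceOf D (C ∩ D)) ∧
    ⋃₀ MutFan B = Set.univ := by
  have hsmul (a : Fin n → ℝ) : ∀ x ∈ bCone B a, ∀ r : ℝ, 0 ≤ r → r • x ∈ bCone B a :=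
    fun _ hx _ hr => smul_mem_bCone hx hr
  refine ⟨fun C hC => ?_, fun C hC G hG => ?_, fun C hC D hD => ?_, ?_⟩
  · obtain ⟨a, haC⟩ := exists_isFaceOf_bCone_of_mem_mutFan hC
    exact ⟨haC.isClosed (isClosed_bCone a) (convex_bCone a),
      fun x hx y hy => haC.add_mem (hsmul a) hx hy,
      fun x hx r hr => haC.smul_mem (hsmul a) hx hr.le⟩
  · rcases hC with hC | ⟨D, hD, hDC⟩
    · exact Or.inr ⟨C, hC, hG⟩
    · exact Or.inr ⟨D, hD, hDC.trans hG⟩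
  · obtain ⟨a, haC⟩ := exists_isFaceOf_bCone_of_mem_mutFan hC
    obtain ⟨a', haD⟩ := exists_isFaceOf_bCone_of_mem_mutFan hD
    exact ⟨haC.inter_of_isFaceOf_inter haD (isFaceOf_bCone_inter a a'),
      Set.inter_comm D C ▸ haD.inter_of_isFaceOf_inter haC (isFaceOf_bCone_inter a' a)⟩
  · exact Set.eq_univ_of_forall fun x => ⟨bCone B x, bCone_mem_mutFan x, self_mem_bCone x⟩

/-- The mutation fan `ℱ_B` is a complete fan. -/
theorem mutFan_isCompleteFan {n : ℕ} (hn : 1 ≤ n) (B : Matrix (Fin n) (Fin n) ℤ)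
    (hB : IsExchangeMatrix B) :
    (∀ C ∈ MutFan B, IsClosed C ∧ IsConvexCone C) ∧
    (∀ C ∈ MutFan B, ∀ G, IsFaceOf C G → G ∈ MutFan B) ∧
    (∀ C ∈ MutFan B, ∀ D ∈ MutFan B, IsFaceOf C (C ∩ D) ∧ IsFaceOf D (C ∩ D)) ∧
    ⋃₀ MutFan B = Set.univ :=
  mutFan_isCompleteFan_general B

end MutationFanPaper
end
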